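/- arXiv:1901.04694 — 7 statements merged into one kernel-verified Lean document; each statement's English description precedes it below -/
import Mathlib

section
/- Let B act on A by automorphisms and let α : A → B be a group homomorphism. Then (A, B, α) is a crossed module (i.e. satisfies α(b•a) = b + α(a) - b and α(a)•a₁ = a + a₁ - a) if and only if the maps 1_A × α : A ⋊ A → A ⋊ B and α × 1_B : A ⋊ B → B ⋊ B are group homomorphisms, where A ⋊ A and B ⋊ B are formed using the conjugation actions and A ⋊ B using the given action. -/
/-- The map `1_A × α : A ⋊ A → A ⋊ B`, `(a, a₁) ↦ (a, α a₁)`, where `A ⋊ A` is formed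
with the conjugation action and `A ⋊ B` with the given action `φ`. -/
def idTimesAlpha {A B : Type*} [Group A] [Group B] (φ : B →* MulAut A) (α : A →* B) :
    (A ⋊[MulAut.conj] A) → (A ⋊[φ] B) :=
  fun x => ⟨x.left, α x.right⟩

/-- The map `α × 1_B : A ⋊ B → B ⋊ B`, `(a, b) ↦ (α a, b)`, where `B ⋊ B` is formed
with the conjugation action. -/
def alphaTimesId {A B : Type*} [Group A] [Group B] (φ : B →* MulAut A) (α : A →* B) :
    (A ⋊[φ] B) → (B ⋊[MulAut.conj] B) :=
  fun x => ⟨α x.left, x.right⟩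

/-- Given an action `φ` of `B` on `A` by automorphisms and a homomorphism `α : A → B`,
`(A, B, α)` is a crossed module (i.e. `α (b • a) = b * α a * b⁻¹` and
`φ (α a) a₁ = a * a₁ * a⁻¹`) if and only if `1_A × α : A ⋊ A → A ⋊ B` and
`α × 1_B : A ⋊ B → B ⋊ B` are group homomorphisms. -/
theorem isXMod_iff_semidirect_homs {A B : Type*} [Group A] [Group B]
    (φ : B →* MulAut A) (α : A →* B) :
    ((∀ (b : B) (a : A), α (φ b a) = b * α a * b⁻¹) ∧
        (∀ a a₁ : A, φ (α a) a₁ = a * a₁ * a⁻¹)) ↔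
      ((∀ x y : A ⋊[MulAut.conj] A,
          idTimesAlpha φ α (x * y) = idTimesAlpha φ α x * idTimesAlpha φ α y) ∧
        (∀ x y : A ⋊[φ] B,
          alphaTimesId φ α (x * y) = alphaTimesId φ α x * alphaTimesId φ α y)) := by
  constructor
  · rintro ⟨h1, h2⟩
    constructor
    · intro x y
      refine SemidirectProduct.ext ?_ ?_
      · simp [idTimesAlpha, SemidirectProduct.mul_left, h2, MulAut.conj_apply]
      · simp [idTimesAlpha, SemidirectProduct.mul_right]
    · intro x y
      refine SemidirectProduct.ext ?_ ?_
      · simp [alphaTimesId, SemidirectProduct.mul_left, h1, MulAut.conj_apply]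
      · simp [alphaTimesId, SemidirectProduct.mul_right]
  · rintro ⟨h1, h2⟩
    constructor
    · intro b a
      have := congrArg SemidirectProduct.left (h2 ⟨1, b⟩ ⟨a, 1⟩)
      simpa [alphaTimesId, SemidirectProduct.mul_left, MulAut.conj_apply] using this
    · intro a a₁
      have := congrArg SemidirectProduct.left (h1 ⟨1, a⟩ ⟨a₁, 1⟩)
      simpa [idTimesAlpha, SemidirectProduct.mul_left, MulAut.conj_apply] using this.symm
end

section
/- Let G be a group-groupoid. Then every element of ker s commutes with every element of ker t under the group operation of G₁. -/
/-- A group-groupoid (internal category in the category of groups): groups `G₁`, `G₀`,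
structure homomorphisms `s, t : G₁ →* G₀`, `ε : G₀ →* G₁`, and a composition
`comp b a` (written `b ∘ a`), defined when `s b = t a`, satisfying the internal
category axioms; `comp_mul` says that composition is a group homomorphism on the
pullback `G₁ ×_{s,t} G₁`. -/
structure GroupGroupoid (G₁ G₀ : Type*) [Group G₁] [Group G₀] where
  s : G₁ →* G₀
  t : G₁ →* G₀
  ε : G₀ →* G₁
  comp : G₁ → G₁ → G₁
  s_ε : ∀ x, s (ε x) = x
  t_ε : ∀ x, t (ε x) = x
  s_comp : ∀ b a, s b = t a → s (comp b a) = s a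
  t_comp : ∀ b a, s b = t a → t (comp b a) = t b
  comp_mul : ∀ b a b' a', s b = t a → s b' = t a' →
    comp (b * b') (a * a') = comp b a * comp b' a'
  comp_assoc : ∀ c b a, s c = t b → s b = t a → comp c (comp b a) = comp (comp c b) a
  id_comp : ∀ a, comp (ε (t a)) a = a
  comp_id : ∀ a, comp a (ε (s a)) = a

/-- In a group-groupoid, every element of `ker s` commutes with every element of
`ker t` under the group operation of `G₁`. -/
theorem groupGroupoid_ker_comm {G₁ G₀ : Type*} [Group G₁] [Group G₀]
    (G : GroupGroupoid G₁ G₀) (a b : G₁) (ha : a ∈ G.s.ker) (hb : b ∈ G.t.ker) :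
    a * b = b * a := by
  have ha' : G.s a = 1 := ha
  have hb' : G.t b = 1 := hb
  have hε1 : G.ε 1 = 1 := G.ε.map_one
  have e1 : G.comp a 1 = a := by
    have := G.comp_id a; rwa [ha', hε1] at this
  have e2 : G.comp 1 b = b := by
    have := G.id_comp b; rwa [hb', hε1] at this
  have h1 : a * b = G.comp a b := by
    have := G.comp_mul a (G.ε 1) (G.ε 1) b (by simp [G.t_ε, ha']) (by simp [G.s_ε, hb'])
    simpa [hε1, e1, e2] using this.symm
  have h2 : b * a = G.comp a b := by
    have := G.comp_mul (G.ε 1) b a (G.ε 1) (by simp [G.s_ε, hb']) (by simp [G.t_ε, ha'])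
    simpa [hε1, e1, e2] using this.symm
  rw [h1, h2]
end

section
/- Let G be a group-groupoid. Set A = ker s, B = G₀, α = t|_{ker s}, and define the action x • a = 1_x + a - 1_x for x ∈ B, a ∈ A. Then (A, B, α) is a crossed module. -/
private theorem GroupGroupoid.peiffer {G₁ G₀ : Type*} [Group G₁] [Group G₀]
    (G : GroupGroupoid G₁ G₀) (a a₁ : G₁) (ha₁ : G.s a₁ = 1) :
    G.ε (G.t a) * a₁ * (G.ε (G.t a))⁻¹ = a * a₁ * a⁻¹ := by
  set e := G.ε (G.t a) with he
  have hce : G.s e = G.t a := G.s_ε _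
  have hc1 : ∀ c : G₁, G.s c = 1 → G.comp c 1 = c := by
    intro c hc
    have := G.comp_id c
    rwa [hc, map_one] at this
  have h1 : G.comp (e * a₁) a = a * a₁ := by
    have := G.comp_mul e a a₁ 1 (by rw [hce]) (by rw [ha₁, map_one])
    rw [mul_one, G.id_comp, hc1 a₁ ha₁] at this
    exact this
  have hsc : G.s (e * a₁ * e⁻¹) = 1 := by
    simp [map_mul, map_inv, hce, ha₁]
  have h2 : G.comp (e * a₁) a = (e * a₁ * e⁻¹) * a := by
    have := G.comp_mul (e * a₁ * e⁻¹) 1 e a (by rw [hsc, map_one]) (by rw [hce])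
    rw [one_mul, G.id_comp, hc1 _ hsc, inv_mul_cancel_right] at this
    exact this
  have : a * a₁ = (e * a₁ * e⁻¹) * a := h1 ▸ h2
  exact eq_mul_inv_iff_mul_eq.mpr this.symm
/-- Brown–Spencer, one direction: for a group-groupoid `G`, setting `A = ker s`,
`B = G₀`, `α = t|_{ker s}`, with the action `x • a = 1_x * a * (1_x)⁻¹`, the triple
`(A, B, α)` is a crossed module. -/
theorem groupGroupoid_to_xmod {G₁ G₀ : Type*} [Group G₁] [Group G₀]
    (G : GroupGroupoid G₁ G₀) :
    ∃ Φ : G₀ →* MulAut G.s.ker,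
      (∀ (x : G₀) (a : G.s.ker), ((Φ x a : G₁)) = G.ε x * (a : G₁) * (G.ε x)⁻¹) ∧
      (∀ (x : G₀) (a : G.s.ker),
        (G.t.comp G.s.ker.subtype) (Φ x a) = x * (G.t.comp G.s.ker.subtype) a * x⁻¹) ∧
      (∀ a a₁ : G.s.ker, Φ ((G.t.comp G.s.ker.subtype) a) a₁ = a * a₁ * a⁻¹) := by
  refine ⟨MulAut.conjNormal.comp G.ε, ?_, ?_, ?_⟩
  · intro x a; rfl
  · intro x a
    simp only [MonoidHom.comp_apply, MulAut.conjNormal_apply]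
    show G.t (G.ε x * (a : G₁) * (G.ε x)⁻¹) = _
    simp [map_mul, map_inv, G.t_ε]
  · intro a a₁
    ext
    show G.ε (G.t (a : G₁)) * (a₁ : G₁) * (G.ε (G.t (a : G₁)))⁻¹ = _
    exact G.peiffer (a : G₁) (a₁ : G₁) a₁.2
end

section
/- Let (A, B, α) be a crossed module. Then the semidirect product A ⋊ B carries a group-groupoid structure over B with s(a,b) = b, t(a,b) = α(a) + b, ε(b) = (0,b), and composition (a', b') ∘ (a, b) = (a' + a, b) whenever b' = α(a) + b; i.e. s, t, ε, m are group homomorphisms and the internal category axioms hold. -/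
/-- Brown–Spencer, other direction: for a crossed module `(A, B, α)`, the semidirect
product `A ⋊ B` carries a group-groupoid structure over `B` with `s (a, b) = b`,
`t (a, b) = α a * b`, `ε b = (1, b)`, and composition
`(a', α a * b) ∘ (a, b) = (a' * a, b)`. -/
theorem xmod_to_groupGroupoid {A B : Type*} [Group A] [Group B]
    (φ : B →* MulAut A) (α : A →* B)
    (hcm1 : ∀ (b : B) (a : A), α (φ b a) = b * α a * b⁻¹)
    (hcm2 : ∀ a a₁ : A, φ (α a) a₁ = a * a₁ * a⁻¹) :
    ∃ G : GroupGroupoid (A ⋊[φ] B) B,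
      (∀ x : A ⋊[φ] B, G.s x = x.right) ∧
      (∀ x : A ⋊[φ] B, G.t x = α x.left * x.right) ∧
      (∀ b : B, G.ε b = ⟨1, b⟩) ∧
      (∀ (a' a : A) (b : B), G.comp ⟨a', α a * b⟩ ⟨a, b⟩ = ⟨a' * a, b⟩) := by
  refine ⟨{
    s := SemidirectProduct.rightHom
    t := { toFun := fun x => α x.left * x.right
           map_one' := by simp
           map_mul' := by
             intro x y
             simp only [SemidirectProduct.mul_left, SemidirectProduct.mul_right, map_mul, hcm1]
             group }
    ε := SemidirectProduct.inr
    comp := fun b a => ⟨b.left * a.left, a.right⟩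
    s_ε := fun x => rfl
    t_ε := by intro x; simp
    s_comp := fun b a _ => rfl
    t_comp := by
      intro b a h
      simp only [MonoidHom.coe_mk, OneHom.coe_mk, map_mul,
        SemidirectProduct.rightHom_eq_right] at h ⊢
      rw [mul_assoc, ← h]
    comp_mul := by
      intro b a b' a' h h'
      simp only [MonoidHom.coe_mk, OneHom.coe_mk,
        SemidirectProduct.rightHom_eq_right] at h h'
      ext
      · simp only [SemidirectProduct.mul_left]
        have : φ b.right b'.left = a.left * φ a.right b'.left * a.left⁻¹ := by
          rw [h, map_mul]
          simp [hcm2]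
        rw [this, map_mul]
        group
      · simp
    comp_assoc := by intro c b a _ _; ext <;> simp [mul_assoc]
    id_comp := by intro a; ext <;> simp
    comp_id := by intro a; ext <;> simp }, fun x => rfl, fun x => rfl, fun b => rfl,
    fun a' a b => rfl⟩
end

section
/- Let C be an internal category in the category of crossed modules, with C₁ = (A₁, B₁, α₁) the crossed module of morphisms. Then for all a₁ ∈ A₁ and b₁ ∈ B₁, the compositional inverses satisfy b₁⁻¹ • a₁⁻¹ = (b₁ • a₁)⁻¹, where x⁻¹ denotes the inverse with respect to composition and • is the crossed module action of B₁ on A₁. -/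
/-- An internal category (equivalently, internal groupoid) in the category `XMod` of
crossed modules over groups: crossed modules `C₁ = (A₁, B₁, α₁)` (with action `φ₁`)
and `C₀ = (A₀, B₀, α₀)` (with action `φ₀`), crossed module morphisms
`s = ⟨sA, sB⟩, t = ⟨tA, tB⟩ : C₁ → C₀`, `ε = ⟨εA, εB⟩ : C₀ → C₁`, and a composition
`m = ⟨compA, compB⟩`, defined on composable pairs, which is a morphism of crossed
modules from the pullback `C₁ ×_{s,t} C₁` to `C₁`, satisfying the internal category
axioms. -/
structure CatXMod (A₁ B₁ A₀ B₀ : Type*) [Group A₁] [Group B₁] [Group A₀] [Group B₀] where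
  φ₁ : B₁ →* MulAut A₁
  α₁ : A₁ →* B₁
  cm1₁ : ∀ b a, α₁ (φ₁ b a) = b * α₁ a * b⁻¹
  cm2₁ : ∀ a a', φ₁ (α₁ a) a' = a * a' * a⁻¹
  φ₀ : B₀ →* MulAut A₀
  α₀ : A₀ →* B₀
  cm1₀ : ∀ b a, α₀ (φ₀ b a) = b * α₀ a * b⁻¹
  cm2₀ : ∀ a a', φ₀ (α₀ a) a' = a * a' * a⁻¹
  sA : A₁ →* A₀
  sB : B₁ →* B₀
  s_comm : ∀ a, sB (α₁ a) = α₀ (sA a)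
  s_equiv : ∀ b a, sA (φ₁ b a) = φ₀ (sB b) (sA a)
  tA : A₁ →* A₀
  tB : B₁ →* B₀
  t_comm : ∀ a, tB (α₁ a) = α₀ (tA a)
  t_equiv : ∀ b a, tA (φ₁ b a) = φ₀ (tB b) (tA a)
  εA : A₀ →* A₁
  εB : B₀ →* B₁
  ε_comm : ∀ n, α₁ (εA n) = εB (α₀ n)
  ε_equiv : ∀ p n, εA (φ₀ p n) = φ₁ (εB p) (εA n)
  sA_εA : ∀ n, sA (εA n) = n
  tA_εA : ∀ n, tA (εA n) = n
  sB_εB : ∀ p, sB (εB p) = p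
  tB_εB : ∀ p, tB (εB p) = p
  compA : A₁ → A₁ → A₁
  compB : B₁ → B₁ → B₁
  sA_comp : ∀ a a', sA a = tA a' → sA (compA a a') = sA a'
  tA_comp : ∀ a a', sA a = tA a' → tA (compA a a') = tA a
  sB_comp : ∀ b b', sB b = tB b' → sB (compB b b') = sB b'
  tB_comp : ∀ b b', sB b = tB b' → tB (compB b b') = tB b
  compA_mul : ∀ a a' c c', sA a = tA a' → sA c = tA c' →
    compA (a * c) (a' * c') = compA a a' * compA c c'
  compB_mul : ∀ b b' d d', sB b = tB b' → sB d = tB d' →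
    compB (b * d) (b' * d') = compB b b' * compB d d'
  compA_assoc : ∀ a a' a'', sA a = tA a' → sA a' = tA a'' →
    compA a (compA a' a'') = compA (compA a a') a''
  compB_assoc : ∀ b b' b'', sB b = tB b' → sB b' = tB b'' →
    compB b (compB b' b'') = compB (compB b b') b''
  id_compA : ∀ a, compA (εA (tA a)) a = a
  compA_id : ∀ a, compA a (εA (sA a)) = a
  id_compB : ∀ b, compB (εB (tB b)) b = b
  compB_id : ∀ b, compB b (εB (sB b)) = b
  comp_comm : ∀ a a', sA a = tA a' → α₁ (compA a a') = compB (α₁ a) (α₁ a')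
  comp_equiv : ∀ b b' a a', sB b = tB b' → sA a = tA a' →
    φ₁ (compB b b') (compA a a') = compA (φ₁ b a) (φ₁ b' a')

/-- In an internal category `C` in `XMod` with `C₁ = (A₁, B₁, α₁)`, the compositional
inverses `a₁⁻¹ = 1_{sA a₁} * a₁⁻¹ * 1_{tA a₁}` and `b₁⁻¹ = 1_{sB b₁} * b₁⁻¹ * 1_{tB b₁}`
satisfy `b₁⁻¹ • a₁⁻¹ = (b₁ • a₁)⁻¹`, where `•` is the crossed module action of `B₁`
on `A₁`. -/
theorem catXMod_inv_act {A₁ B₁ A₀ B₀ : Type*} [Group A₁] [Group B₁] [Group A₀] [Group B₀]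
    (C : CatXMod A₁ B₁ A₀ B₀) (a₁ : A₁) (b₁ : B₁) :
    C.φ₁ (C.εB (C.sB b₁) * b₁⁻¹ * C.εB (C.tB b₁)) (C.εA (C.sA a₁) * a₁⁻¹ * C.εA (C.tA a₁)) =
      C.εA (C.sA (C.φ₁ b₁ a₁)) * (C.φ₁ b₁ a₁)⁻¹ * C.εA (C.tA (C.φ₁ b₁ a₁)) := by
  -- composition is determined by the group structure
  have hA : ∀ x y : A₁, C.sA x = C.tA y →
      C.compA x y = x * (C.εA (C.sA x))⁻¹ * y := by
    intro x y h
    have h1 : C.sA x = C.tA (C.εA (C.sA x)) := by rw [C.tA_εA]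
    have h2 : C.sA (1 : A₁) = C.tA ((C.εA (C.sA x))⁻¹ * y) := by
      simp [h, C.tA_εA]
    have hm := C.compA_mul x (C.εA (C.sA x)) 1 ((C.εA (C.sA x))⁻¹ * y) h1 h2
    have hz : C.compA 1 ((C.εA (C.sA x))⁻¹ * y) = (C.εA (C.sA x))⁻¹ * y := by
      have := C.id_compA ((C.εA (C.sA x))⁻¹ * y)
      rwa [← h2, map_one, map_one] at this
    rw [mul_one, mul_inv_cancel_left] at hm
    rw [hm, hz, C.compA_id, mul_assoc]
  have hB : ∀ x y : B₁, C.sB x = C.tB y →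
      C.compB x y = x * (C.εB (C.sB x))⁻¹ * y := by
    intro x y h
    have h1 : C.sB x = C.tB (C.εB (C.sB x)) := by rw [C.tB_εB]
    have h2 : C.sB (1 : B₁) = C.tB ((C.εB (C.sB x))⁻¹ * y) := by
      simp [h, C.tB_εB]
    have hm := C.compB_mul x (C.εB (C.sB x)) 1 ((C.εB (C.sB x))⁻¹ * y) h1 h2
    have hz : C.compB 1 ((C.εB (C.sB x))⁻¹ * y) = (C.εB (C.sB x))⁻¹ * y := by
      have := C.id_compB ((C.εB (C.sB x))⁻¹ * y)
      rwa [← h2, map_one, map_one] at this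
    rw [mul_one, mul_inv_cancel_left] at hm
    rw [hm, hz, C.compB_id, mul_assoc]
  set c : A₁ := C.εA (C.sA a₁) * a₁⁻¹ * C.εA (C.tA a₁) with hc
  set d : B₁ := C.εB (C.sB b₁) * b₁⁻¹ * C.εB (C.tB b₁) with hd
  have htd : C.tB d = C.sB b₁ := by
    simp [hd, C.tB_εB]
  have htc : C.tA c = C.sA a₁ := by
    simp [hc, C.tA_εA]
  have key := C.comp_equiv b₁ d a₁ c htd.symm htc.symm
  have h1 : C.compB b₁ d = C.εB (C.tB b₁) := by
    rw [hB b₁ d htd.symm, hd]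
    group
  have h2 : C.compA a₁ c = C.εA (C.tA a₁) := by
    rw [hA a₁ c htc.symm, hc]
    group
  rw [h1, h2] at key
  have hst : C.sA (C.φ₁ b₁ a₁) = C.tA (C.φ₁ d c) := by
    rw [C.s_equiv, C.t_equiv, htd, htc]
  rw [hA _ _ hst] at key
  have hε : C.φ₁ (C.εB (C.tB b₁)) (C.εA (C.tA a₁)) = C.εA (C.tA (C.φ₁ b₁ a₁)) := by
    rw [C.t_equiv, C.ε_equiv]
  rw [hε] at key
  -- solve for φ₁ d c
  have key' : C.φ₁ d c =
      C.εA (C.sA (C.φ₁ b₁ a₁)) * ((C.φ₁ b₁ a₁)⁻¹ * C.εA (C.tA (C.φ₁ b₁ a₁))) := by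
    rw [key]
    group
  rw [key', ← mul_assoc]
end

section
/- Let C = (C₁, C₀, s, t, ε, m, n) be an internal groupoid in the category of crossed modules, with C₁ = (A₁,B₁,α₁), C₀ = (A₀,B₀,α₀). Set L = ker s_A, M = ker s_B, N = A₀, P = B₀, λ = α₁|_L, λ' = t_A|_L, μ = t_B|_M, ν = α₀, and define actions p•m = 1_p + m - 1_p, p•l = 1_p • l (via the B₁-action on A₁), and h : M × N → L, h(m,n) = m•1_n - 1_n. Then (L, M, N, P, λ, λ', μ, ν, h) is a crossed square. -/
/-!
In an internal category in groups the composition is forced by the interchange law: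
`a ∘ a' = a * (1_{s a})⁻¹ * a'`, and the kernels of `s` and `t` commute elementwise.
For an internal category in crossed modules the interchange law for the action shows moreover
that `ker t_B` acts trivially on `ker s_A`, so on `ker s_A` (and, by conjugation, on `ker s_B`)
an arrow `b` acts as the identity arrow `1_{t b}`. Every crossed square axiom reduces to these
facts and the crossed module axioms of `C₁`.
-/

def MonoidHom.mulAutRestrict {H G : Type*} [Group H] [Group G] (Φ : H →* MulAut G)
    (K : Subgroup G) (hK : ∀ (h : H), ∀ g ∈ K, Φ h g ∈ K) : H →* MulAut K where
  toFun h :=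
    { toFun := fun g => ⟨Φ h g, hK h g g.2⟩
      invFun := fun g => ⟨Φ h⁻¹ g, hK h⁻¹ g g.2⟩
      left_inv := fun g => Subtype.ext (by simp [map_inv])
      right_inv := fun g => Subtype.ext (by simp [map_inv])
      map_mul' := fun g g' => Subtype.ext (map_mul (Φ h) (g : G) g') }
  map_one' := by ext; simp
  map_mul' := fun h h' => by ext; simp

@[simp] lemma MonoidHom.coe_mulAutRestrict_apply {H G : Type*} [Group H] [Group G]
    (Φ : H →* MulAut G) (K : Subgroup G) (hK : ∀ (h : H), ∀ g ∈ K, Φ h g ∈ K) (h : H) (g : K) :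
    (Φ.mulAutRestrict K hK h g : G) = Φ h (g : G) := rfl

namespace CatXMod

variable {A₁ B₁ A₀ B₀ : Type*} [Group A₁] [Group B₁] [Group A₀] [Group B₀]
  (C : CatXMod A₁ B₁ A₀ B₀)

lemma compA_one_left {a : A₁} (ha : C.tA a = 1) : C.compA 1 a = a := by
  simpa [ha] using C.id_compA a

lemma compA_one_right {a : A₁} (ha : C.sA a = 1) : C.compA a 1 = a := by
  simpa [ha] using C.compA_id a

lemma compB_one_left {b : B₁} (hb : C.tB b = 1) : C.compB 1 b = b := by
  simpa [hb] using C.id_compB b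

lemma compB_one_right {b : B₁} (hb : C.sB b = 1) : C.compB b 1 = b := by
  simpa [hb] using C.compB_id b

lemma compA_eq_mul_inv_mul {a a' : A₁} (h : C.sA a = C.tA a') :
    C.compA a a' = a * (C.εA (C.sA a))⁻¹ * a' := by
  have hfactor : C.compA (a * 1) (C.εA (C.sA a) * ((C.εA (C.sA a))⁻¹ * a')) =
      C.compA a (C.εA (C.sA a)) * C.compA 1 ((C.εA (C.sA a))⁻¹ * a') :=
    C.compA_mul _ _ _ _ (C.tA_εA _).symm (by simp [C.tA_εA, h])
  rw [mul_one, mul_inv_cancel_left, C.compA_id,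
    C.compA_one_left (by simp [C.tA_εA, h])] at hfactor
  rw [hfactor, mul_assoc]

lemma commute_of_tB_eq_one_of_sB_eq_one {x y : B₁} (hx : C.tB x = 1) (hy : C.sB y = 1) :
    Commute x y := by
  have hyx := C.compB_mul y 1 1 x (by simp [hy]) (by simp [hx])
  have hxy := C.compB_mul 1 x y 1 (by simp [hx]) (by simp [hy])
  simp only [mul_one, one_mul, C.compB_one_left hx, C.compB_one_right hy] at hyx hxy
  exact hxy.symm.trans hyx

lemma φ₁_apply_eq_self {b : B₁} (hb : C.tB b = 1) {l : A₁} (hl : C.sA l = 1) :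
    C.φ₁ b l = l := by
  have key := C.comp_equiv 1 b l 1 (by simp [hb]) (by simp [hl])
  simpa [C.compB_one_left hb, C.compA_one_right hl] using key

lemma φ₁_apply_eq_εB_tB (b : B₁) {l : A₁} (hl : C.sA l = 1) :
    C.φ₁ b l = C.φ₁ (C.εB (C.tB b)) l := by
  have hker : C.tB ((C.εB (C.tB b))⁻¹ * b) = 1 := by simp [C.tB_εB]
  calc C.φ₁ b l = C.φ₁ (C.εB (C.tB b)) (C.φ₁ ((C.εB (C.tB b))⁻¹ * b) l) := by
        rw [← MulAut.mul_apply, ← map_mul, mul_inv_cancel_left]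
    _ = C.φ₁ (C.εB (C.tB b)) l := by rw [C.φ₁_apply_eq_self hker hl]

lemma conj_eq_εB_tB_conj (b : B₁) {y : B₁} (hy : C.sB y = 1) :
    b * y * b⁻¹ = C.εB (C.tB b) * y * (C.εB (C.tB b))⁻¹ := by
  have hker : C.tB ((C.εB (C.tB b))⁻¹ * b) = 1 := by simp [C.tB_εB]
  have hcomm := (C.commute_of_tB_eq_one_of_sB_eq_one hker hy).eq
  calc b * y * b⁻¹
      = C.εB (C.tB b) * (((C.εB (C.tB b))⁻¹ * b) * y) * b⁻¹ := by group
    _ = C.εB (C.tB b) * y * (C.εB (C.tB b))⁻¹ := by rw [hcomm]; group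

lemma φ₁_apply_eq_of_sB_eq_one {m : B₁} (hm : C.sB m = 1) (l : A₁) :
    C.φ₁ m l = C.φ₁ m (C.εA (C.tA l)) * (C.εA (C.tA l))⁻¹ * l := by
  have key := C.comp_equiv m 1 (C.εA (C.tA l)) l (by simp [hm]) (by rw [C.sA_εA])
  rw [C.compB_one_right hm, C.id_compA, map_one, MulAut.one_apply] at key
  have hs : C.sA (C.φ₁ m (C.εA (C.tA l))) = C.tA l := by
    rw [C.s_equiv, hm, map_one, MulAut.one_apply, C.sA_εA]
  rw [key, C.compA_eq_mul_inv_mul (by rw [hs]), hs]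

def lam : C.sA.ker →* C.sB.ker :=
  (C.α₁.domRestrict C.sA.ker).codRestrict C.sB.ker fun l => by
    simp [MonoidHom.mem_ker, C.s_comm, MonoidHom.mem_ker.mp l.2]

@[simp] lemma coe_lam_apply (l : C.sA.ker) : (C.lam l : B₁) = C.α₁ l := rfl

def lam' : C.sA.ker →* A₀ := C.tA.domRestrict C.sA.ker

@[simp] lemma lam'_apply (l : C.sA.ker) : C.lam' l = C.tA l := rfl

def mu : C.sB.ker →* B₀ := C.tB.domRestrict C.sB.ker

@[simp] lemma mu_apply (m : C.sB.ker) : C.mu m = C.tB m := rfl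

def actL : B₀ →* MulAut C.sA.ker :=
  (C.φ₁.mulAutRestrict C.sA.ker fun _ a ha => by
    simp [MonoidHom.mem_ker, C.s_equiv, MonoidHom.mem_ker.mp ha]).comp C.εB

@[simp] lemma coe_actL_apply (p : B₀) (l : C.sA.ker) :
    (C.actL p l : A₁) = C.φ₁ (C.εB p) l := rfl

def actM : B₀ →* MulAut C.sB.ker := MulAut.conjNormal.comp C.εB

@[simp] lemma coe_actM_apply (p : B₀) (m : C.sB.ker) :
    (C.actM p m : B₁) = C.εB p * m * (C.εB p)⁻¹ := rfl

def pairing (m : C.sB.ker) (n : A₀) : C.sA.ker :=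
  ⟨C.φ₁ m (C.εA n) * (C.εA n)⁻¹, by
    simp [MonoidHom.mem_ker, C.s_equiv, MonoidHom.mem_ker.mp m.2, C.sA_εA]⟩

@[simp] lemma coe_pairing (m : C.sB.ker) (n : A₀) :
    (C.pairing m n : A₁) = C.φ₁ m (C.εA n) * (C.εA n)⁻¹ := rfl

lemma lam_actL (p : B₀) (l : C.sA.ker) : C.lam (C.actL p l) = C.actM p (C.lam l) :=
  Subtype.ext (C.cm1₁ _ _)

lemma lam'_actL (p : B₀) (l : C.sA.ker) : C.lam' (C.actL p l) = C.φ₀ p (C.lam' l) := by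
  simp [C.t_equiv, C.tB_εB]

lemma mu_actM (p : B₀) (m : C.sB.ker) : C.mu (C.actM p m) = p * C.mu m * p⁻¹ := by
  simp [C.tB_εB]

lemma actM_mu (m m' : C.sB.ker) : C.actM (C.mu m) m' = m * m' * m⁻¹ :=
  Subtype.ext (C.conj_eq_εB_tB_conj m (MonoidHom.mem_ker.mp m'.2)).symm

lemma actL_mu_lam (l l' : C.sA.ker) : C.actL (C.mu (C.lam l)) l' = l * l' * l⁻¹ := by
  ext
  simp only [coe_actL_apply, mu_apply, coe_lam_apply, Subgroup.coe_mul, Subgroup.coe_inv]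
  rw [← C.φ₁_apply_eq_εB_tB _ (MonoidHom.mem_ker.mp l'.2), C.cm2₁]

lemma lam_pairing (m : C.sB.ker) (n : A₀) :
    C.lam (C.pairing m n) = m * C.actM (C.α₀ n) m⁻¹ := by
  ext
  simp only [coe_lam_apply, coe_pairing, coe_actM_apply, Subgroup.coe_mul, Subgroup.coe_inv,
    map_mul, map_inv, C.cm1₁, C.ε_comm]
  group

lemma lam'_pairing (m : C.sB.ker) (n : A₀) :
    C.lam' (C.pairing m n) = C.φ₀ (C.mu m) n * n⁻¹ := by
  simp [C.t_equiv, C.tA_εA]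

lemma pairing_lam (l : C.sA.ker) (n : A₀) :
    C.pairing (C.lam l) n = l * C.actL (C.α₀ n) l⁻¹ := by
  ext
  simp only [coe_pairing, coe_lam_apply, coe_actL_apply, Subgroup.coe_mul, Subgroup.coe_inv]
  rw [← C.ε_comm, C.cm2₁, C.cm2₁]
  group

lemma pairing_lam' (m : C.sB.ker) (l : C.sA.ker) :
    C.pairing m (C.lam' l) = C.actL (C.mu m) l * l⁻¹ := by
  ext
  simp only [coe_pairing, lam'_apply, coe_actL_apply, mu_apply, Subgroup.coe_mul,
    Subgroup.coe_inv]
  rw [← C.φ₁_apply_eq_εB_tB _ (MonoidHom.mem_ker.mp l.2),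
    C.φ₁_apply_eq_of_sB_eq_one (MonoidHom.mem_ker.mp m.2) l]
  group

lemma pairing_mul_left (m m' : C.sB.ker) (n : A₀) :
    C.pairing (m * m') n = C.actL (C.mu m) (C.pairing m' n) * C.pairing m n := by
  ext
  rw [Subgroup.coe_mul, coe_actL_apply, mu_apply,
    ← C.φ₁_apply_eq_εB_tB _ (MonoidHom.mem_ker.mp (C.pairing m' n).2)]
  simp only [coe_pairing, Subgroup.coe_mul, map_mul, map_inv, MulAut.mul_apply]
  group

lemma pairing_mul_right (m : C.sB.ker) (n n' : A₀) :
    C.pairing m (n * n') = C.pairing m n * C.actL (C.α₀ n) (C.pairing m n') := by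
  ext
  simp only [coe_pairing, coe_actL_apply, Subgroup.coe_mul]
  rw [← C.ε_comm, C.cm2₁]
  simp only [map_mul, mul_inv_rev]
  group

lemma pairing_actM_φ₀ (p : B₀) (m : C.sB.ker) (n : A₀) :
    C.pairing (C.actM p m) (C.φ₀ p n) = C.actL p (C.pairing m n) := by
  ext
  simp only [coe_pairing, coe_actM_apply, coe_actL_apply, C.ε_equiv, map_mul, map_inv,
    MulAut.mul_apply, MulAut.inv_apply_self]

end CatXMod

/-- For an internal groupoid `C` in `XMod`, setting `L = ker sA`, `M = ker sB`,
`N = A₀`, `P = B₀`, `λ = α₁|_L`, `λ' = tA|_L`, `μ = tB|_M`, `ν = α₀`, with the actions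
`p • m = 1_p * m * (1_p)⁻¹` on `M`, `p • l = 1_p • l` (via the `B₁`-action on `A₁`)
on `L`, the given action `φ₀` on `N`, and `h : M × N → L`, `h(m, n) = m • 1_n * (1_n)⁻¹`,
the data `(L, M, N, P, λ, λ', μ, ν, h)` is a crossed square. -/
theorem catXMod_to_crossedSquare {A₁ B₁ A₀ B₀ : Type*}
    [Group A₁] [Group B₁] [Group A₀] [Group B₀] (C : CatXMod A₁ B₁ A₀ B₀) :
    ∃ (lam : C.sA.ker →* C.sB.ker) (lam' : C.sA.ker →* A₀) (mu : C.sB.ker →* B₀)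
      (ΦL : B₀ →* MulAut C.sA.ker) (ΦM : B₀ →* MulAut C.sB.ker)
      (h : C.sB.ker → A₀ → C.sA.ker),
      -- identification of the structure maps
      (∀ l : C.sA.ker, ((lam l : B₁)) = C.α₁ (l : A₁)) ∧
      (∀ l : C.sA.ker, lam' l = C.tA (l : A₁)) ∧
      (∀ m : C.sB.ker, mu m = C.tB (m : B₁)) ∧
      (∀ (p : B₀) (l : C.sA.ker), ((ΦL p l : A₁)) = C.φ₁ (C.εB p) (l : A₁)) ∧
      (∀ (p : B₀) (m : C.sB.ker), ((ΦM p m : B₁)) = C.εB p * (m : B₁) * (C.εB p)⁻¹) ∧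
      (∀ (m : C.sB.ker) (n : A₀), ((h m n : A₁)) = C.φ₁ (m : B₁) (C.εA n) * (C.εA n)⁻¹) ∧
      -- ν λ' = μ λ
      (∀ l : C.sA.ker, C.α₀ (lam' l) = mu (lam l)) ∧
      -- (i) λ and λ' are P-equivariant
      (∀ (p : B₀) (l : C.sA.ker), lam (ΦL p l) = ΦM p (lam l)) ∧
      (∀ (p : B₀) (l : C.sA.ker), lam' (ΦL p l) = C.φ₀ p (lam' l)) ∧
      -- (i) μ, ν and κ = μ λ are crossed modules
      (∀ (p : B₀) (m : C.sB.ker), mu (ΦM p m) = p * mu m * p⁻¹) ∧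
      (∀ m m' : C.sB.ker, ΦM (mu m) m' = m * m' * m⁻¹) ∧
      (∀ (p : B₀) (n : A₀), C.α₀ (C.φ₀ p n) = p * C.α₀ n * p⁻¹) ∧
      (∀ n n' : A₀, C.φ₀ (C.α₀ n) n' = n * n' * n⁻¹) ∧
      (∀ (p : B₀) (l : C.sA.ker), mu (lam (ΦL p l)) = p * mu (lam l) * p⁻¹) ∧
      (∀ l l' : C.sA.ker, ΦL (mu (lam l)) l' = l * l' * l⁻¹) ∧
      -- (ii)
      (∀ (m : C.sB.ker) (n : A₀), lam (h m n) = m * ΦM (C.α₀ n) m⁻¹) ∧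
      (∀ (m : C.sB.ker) (n : A₀), lam' (h m n) = C.φ₀ (mu m) n * n⁻¹) ∧
      -- (iii)
      (∀ (l : C.sA.ker) (n : A₀), h (lam l) n = l * ΦL (C.α₀ n) l⁻¹) ∧
      (∀ (m : C.sB.ker) (l : C.sA.ker), h m (lam' l) = ΦL (mu m) l * l⁻¹) ∧
      -- (iv)
      (∀ (m m' : C.sB.ker) (n : A₀), h (m * m') n = ΦL (mu m) (h m' n) * h m n) ∧
      (∀ (m : C.sB.ker) (n n' : A₀), h m (n * n') = h m n * ΦL (C.α₀ n) (h m n')) ∧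
      -- (v)
      (∀ (p : B₀) (m : C.sB.ker) (n : A₀), h (ΦM p m) (C.φ₀ p n) = ΦL p (h m n)) := by
  exact ⟨C.lam, C.lam', C.mu, C.actL, C.actM, C.pairing,
    fun _ => rfl, fun _ => rfl, fun _ => rfl, fun _ _ => rfl, fun _ _ => rfl, fun _ _ => rfl,
    fun l => (C.t_comm l).symm, C.lam_actL, C.lam'_actL, C.mu_actM, C.actM_mu, C.cm1₀, C.cm2₀,
    fun p l => by rw [C.lam_actL, C.mu_actM], C.actL_mu_lam, C.lam_pairing, C.lam'_pairing,
    C.pairing_lam, C.pairing_lam', C.pairing_mul_left, C.pairing_mul_right, C.pairing_actM_φ₀⟩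
end

section
/- Let S = (L, M, N, P, λ, λ', μ, ν, h) be a crossed square. Then the semidirect product L ⋊ N, with the action of M ⋊ P on L ⋊ N given by (m,p)•(l,n) = (m•(p•l) + h(m, p•n), p•n), and the homomorphism λ × ν : L ⋊ N → M ⋊ P, (l,n) ↦ (λ(l), ν(n)), form a crossed module (L ⋊ N, M ⋊ P, λ × ν). -/
set_option linter.unusedSectionVars false

namespace CrossedSquareAux

variable {L M N P : Type*} [Group L] [Group M] [Group N] [Group P]
variable (lam : L →* M) (mu : M →* P) (nu : N →* P) (ΦL : P →* MulAut L)
  (ΦM : P →* MulAut M) (ΦN : P →* MulAut N) (h : M → N → L)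

def act (m : M) (p : P) (a : L ⋊[ΦL.comp nu] N) : L ⋊[ΦL.comp nu] N :=
  ⟨ΦL (mu m) (ΦL p a.left) * h m (ΦN p a.right), ΦN p a.right⟩

theorem hL_comp (a b : P) (x : L) : ΦL a (ΦL b x) = ΦL (a * b) x := by
  simp [map_mul]

theorem h_one (hh5 : ∀ m m' n, h (m * m') n = ΦL (mu m) (h m' n) * h m n) (n : N) :
    h 1 n = 1 := by
  have := hh5 1 1 n
  simp only [one_mul, map_one, MulAut.one_apply] at this
  exact (left_eq_mul.mp this)

theorem act_one (hh5 : ∀ m m' n, h (m * m') n = ΦL (mu m) (h m' n) * h m n)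
    (a : L ⋊[ΦL.comp nu] N) : act mu nu ΦL ΦN h 1 1 a = a := by
  ext <;> simp [act, h_one mu ΦL h hh5]

theorem act_comp
    (hmu1 : ∀ p m, mu (ΦM p m) = p * mu m * p⁻¹)
    (hh5 : ∀ m m' n, h (m * m') n = ΦL (mu m) (h m' n) * h m n)
    (hh7 : ∀ p m n, h (ΦM p m) (ΦN p n) = ΦL p (h m n))
    (m m' : M) (p p' : P) (a : L ⋊[ΦL.comp nu] N) :
    act mu nu ΦL ΦN h (m * ΦM p m') (p * p') a
      = act mu nu ΦL ΦN h m p (act mu nu ΦL ΦN h m' p' a) := by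
  ext
  · show ΦL (mu (m * ΦM p m')) (ΦL (p * p') a.left) * h (m * ΦM p m') (ΦN (p * p') a.right)
      = ΦL (mu m) (ΦL p (ΦL (mu m') (ΦL p' a.left) * h m' (ΦN p' a.right)))
          * h m (ΦN p (ΦN p' a.right))
    have e1 : ΦN (p * p') a.right = ΦN p (ΦN p' a.right) := by simp [map_mul]
    rw [e1, hh5, hh7, map_mul mu, hmu1, map_mul (ΦL p), map_mul (ΦL (mu m))]
    simp only [hL_comp]
    have e2 : mu m * (p * mu m' * p⁻¹) * (p * p') = mu m * (p * (mu m' * p')) := by group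
    rw [e2, mul_assoc]
  · simp [act, map_mul]

theorem h_conj
    (hmu1 : ∀ p m, mu (ΦM p m) = p * mu m * p⁻¹)
    (hk2 : ∀ l l', ΦL (mu (lam l)) l' = l * l' * l⁻¹)
    (hh1 : ∀ m n, lam (h m n) = m * ΦM (nu n) m⁻¹)
    (m : M) (n : N) (x : L) :
    h m n * ΦL (nu n) (ΦL (mu m) x) = ΦL (mu m) (ΦL (nu n) x) * h m n := by
  have h1 := hk2 (h m n) (ΦL (nu n) (ΦL (mu m) x))
  rw [hh1, map_mul, hmu1, map_inv] at h1
  simp only [hL_comp] at h1 ⊢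
  have e : mu m * (nu n * (mu m)⁻¹ * (nu n)⁻¹) * (nu n * mu m) = mu m * nu n := by group
  rw [e] at h1
  rw [h1]
  group

theorem act_mul
    (hmu1 : ∀ p m, mu (ΦM p m) = p * mu m * p⁻¹)
    (hnu1 : ∀ p n, nu (ΦN p n) = p * nu n * p⁻¹)
    (hk2 : ∀ l l', ΦL (mu (lam l)) l' = l * l' * l⁻¹)
    (hh1 : ∀ m n, lam (h m n) = m * ΦM (nu n) m⁻¹)
    (hh6 : ∀ m n n', h m (n * n') = h m n * ΦL (nu n) (h m n'))
    (m : M) (p : P) (a a' : L ⋊[ΦL.comp nu] N) :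
    act mu nu ΦL ΦN h m p (a * a') = act mu nu ΦL ΦN h m p a * act mu nu ΦL ΦN h m p a' := by
  ext
  · show ΦL (mu m) (ΦL p (a.left * ΦL (nu a.right) a'.left)) * h m (ΦN p (a.right * a'.right))
      = ΦL (mu m) (ΦL p a.left) * h m (ΦN p a.right)
        * ΦL (nu (ΦN p a.right)) (ΦL (mu m) (ΦL p a'.left) * h m (ΦN p a'.right))
    rw [map_mul (ΦN p), hh6, map_mul (ΦL p), map_mul (ΦL (mu m)),
      map_mul (ΦL (nu (ΦN p a.right)))]
    have key : ΦL (mu m) (ΦL p (ΦL (nu a.right) a'.left)) * h m (ΦN p a.right)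
        = h m (ΦN p a.right) * ΦL (nu (ΦN p a.right)) (ΦL (mu m) (ΦL p a'.left)) := by
      have e : ΦL p (ΦL (nu a.right) a'.left) = ΦL (nu (ΦN p a.right)) (ΦL p a'.left) := by
        simp only [hL_comp, hnu1]
        congr 1
        group
      rw [e, h_conj lam mu nu ΦL ΦM h hmu1 hk2 hh1 m (ΦN p a.right) (ΦL p a'.left)]
    have swap : ∀ (A B C D B' : L), B * C = C * B' → A * B * (C * D) = A * C * (B' * D) := by
      intro A B C D B' hBC
      rw [mul_assoc, ← mul_assoc B, hBC, mul_assoc C, ← mul_assoc]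
    exact swap _ _ _ _ _ key
  · simp [act, map_mul]

variable (hmu1 : ∀ p m, mu (ΦM p m) = p * mu m * p⁻¹)
  (hnu1 : ∀ p n, nu (ΦN p n) = p * nu n * p⁻¹)
  (hk2 : ∀ l l', ΦL (mu (lam l)) l' = l * l' * l⁻¹)
  (hh1 : ∀ m n, lam (h m n) = m * ΦM (nu n) m⁻¹)
  (hh5 : ∀ m m' n, h (m * m') n = ΦL (mu m) (h m' n) * h m n)
  (hh6 : ∀ m n n', h m (n * n') = h m n * ΦL (nu n) (h m n'))
  (hh7 : ∀ p m n, h (ΦM p m) (ΦN p n) = ΦL p (h m n))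

def actEquiv (m : M) (p : P) : MulAut (L ⋊[ΦL.comp nu] N) :=
  { toFun := act mu nu ΦL ΦN h m p
    invFun := act mu nu ΦL ΦN h (ΦM p⁻¹ m⁻¹) p⁻¹
    left_inv := fun a => by
      rw [← act_comp mu nu ΦL ΦM ΦN h hmu1 hh5 hh7, ← map_mul, inv_mul_cancel,
        inv_mul_cancel, map_one]
      exact act_one mu nu ΦL ΦN h hh5 a
    right_inv := fun a => by
      rw [← act_comp mu nu ΦL ΦM ΦN h hmu1 hh5 hh7, hL_comp ΦM, mul_inv_cancel,
        map_one, MulAut.one_apply, mul_inv_cancel]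
      exact act_one mu nu ΦL ΦN h hh5 a
    map_mul' := act_mul lam mu nu ΦL ΦM ΦN h hmu1 hnu1 hk2 hh1 hh6 m p }

def actHom : (M ⋊[ΦM] P) →* MulAut (L ⋊[ΦL.comp nu] N) :=
  { toFun := fun b => actEquiv lam mu nu ΦL ΦM ΦN h hmu1 hnu1 hk2 hh1 hh5 hh6 hh7 b.left b.right
    map_one' := by
      refine MulEquiv.ext fun a => ?_
      exact act_one mu nu ΦL ΦN h hh5 a
    map_mul' := fun b b' => by
      refine MulEquiv.ext fun a => ?_
      exact act_comp mu nu ΦL ΦM ΦN h hmu1 hh5 hh7 b.left b'.left b.right b'.right a }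

def lamnuHom (hlam : ∀ p l, lam (ΦL p l) = ΦM p (lam l)) :
    (L ⋊[ΦL.comp nu] N) →* (M ⋊[ΦM] P) :=
  { toFun := fun a => ⟨lam a.left, nu a.right⟩
    map_one' := by ext <;> simp
    map_mul' := fun a a' => by
      ext
      · show lam (a.left * ΦL (nu a.right) a'.left) = lam a.left * ΦM (nu a.right) (lam a'.left)
        rw [map_mul, hlam]
      · simp }

end CrossedSquareAux

open CrossedSquareAux in
/-- For a crossed square `(L, M, N, P, λ, λ', μ, ν, h)` (with actions `ΦL, ΦM, ΦN` of
`P` on `L, M, N`, and the induced actions of `M` on `L` via `μ` and of `N` on `L, M`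
via `ν`), the semidirect products `L ⋊ N` and `M ⋊ P`, with the action
`(m, p) • (l, n) = (m • (p • l) * h(m, p • n), p • n)` and the homomorphism
`λ × ν : (l, n) ↦ (λ l, ν n)`, form a crossed module `(L ⋊ N, M ⋊ P, λ × ν)`. -/
theorem crossedSquare_to_xmod {L M N P : Type*} [Group L] [Group M] [Group N] [Group P]
    (lam : L →* M) (lam' : L →* N) (mu : M →* P) (nu : N →* P)
    (ΦL : P →* MulAut L) (ΦM : P →* MulAut M) (ΦN : P →* MulAut N)
    (h : M → N → L)
    -- ν λ' = μ λ
    (hsq : ∀ l, nu (lam' l) = mu (lam l))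
    -- (i) λ and λ' are P-equivariant
    (hlam : ∀ p l, lam (ΦL p l) = ΦM p (lam l))
    (hlam' : ∀ p l, lam' (ΦL p l) = ΦN p (lam' l))
    -- (i) μ, ν and κ = μ λ are crossed modules
    (hmu1 : ∀ p m, mu (ΦM p m) = p * mu m * p⁻¹)
    (hmu2 : ∀ m m', ΦM (mu m) m' = m * m' * m⁻¹)
    (hnu1 : ∀ p n, nu (ΦN p n) = p * nu n * p⁻¹)
    (hnu2 : ∀ n n', ΦN (nu n) n' = n * n' * n⁻¹)
    (hk1 : ∀ p l, mu (lam (ΦL p l)) = p * mu (lam l) * p⁻¹)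
    (hk2 : ∀ l l', ΦL (mu (lam l)) l' = l * l' * l⁻¹)
    -- (ii)
    (hh1 : ∀ m n, lam (h m n) = m * ΦM (nu n) m⁻¹)
    (hh2 : ∀ m n, lam' (h m n) = ΦN (mu m) n * n⁻¹)
    -- (iii)
    (hh3 : ∀ l n, h (lam l) n = l * ΦL (nu n) l⁻¹)
    (hh4 : ∀ m l, h m (lam' l) = ΦL (mu m) l * l⁻¹)
    -- (iv)
    (hh5 : ∀ m m' n, h (m * m') n = ΦL (mu m) (h m' n) * h m n)
    (hh6 : ∀ m n n', h m (n * n') = h m n * ΦL (nu n) (h m n'))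
    -- (v)
    (hh7 : ∀ p m n, h (ΦM p m) (ΦN p n) = ΦL p (h m n)) :
    ∃ (Φ : (M ⋊[ΦM] P) →* MulAut (L ⋊[ΦL.comp nu] N))
      (lamnu : (L ⋊[ΦL.comp nu] N) →* (M ⋊[ΦM] P)),
      -- the action and the homomorphism are the stated ones
      (∀ (m : M) (p : P) (l : L) (n : N),
        Φ ⟨m, p⟩ ⟨l, n⟩ = ⟨ΦL (mu m) (ΦL p l) * h m (ΦN p n), ΦN p n⟩) ∧
      (∀ (l : L) (n : N), lamnu ⟨l, n⟩ = ⟨lam l, nu n⟩) ∧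
      -- crossed module axioms
      (∀ (b : M ⋊[ΦM] P) (a : L ⋊[ΦL.comp nu] N), lamnu (Φ b a) = b * lamnu a * b⁻¹) ∧
      (∀ a a' : L ⋊[ΦL.comp nu] N, Φ (lamnu a) a' = a * a' * a⁻¹) := by
  refine ⟨actHom lam mu nu ΦL ΦM ΦN h hmu1 hnu1 hk2 hh1 hh5 hh6 hh7,
    lamnuHom lam nu ΦL ΦM hlam, fun m p l n => rfl, fun l n => rfl, ?_, ?_⟩
  · rintro ⟨m, p⟩ ⟨l, n⟩
    ext
    · show lam (ΦL (mu m) (ΦL p l) * h m (ΦN p n))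
        = ((⟨m, p⟩ : M ⋊[ΦM] P) * ⟨lam l, nu n⟩ * (⟨m, p⟩ : M ⋊[ΦM] P)⁻¹).left
      simp only [SemidirectProduct.mul_left, SemidirectProduct.mul_right,
        SemidirectProduct.inv_left, SemidirectProduct.inv_right, map_mul, hlam, hh1, hmu2,
        hnu1, MulAut.mul_apply]
      group
    · show nu (ΦN p n)
        = ((⟨m, p⟩ : M ⋊[ΦM] P) * ⟨lam l, nu n⟩ * (⟨m, p⟩ : M ⋊[ΦM] P)⁻¹).right
      simp only [SemidirectProduct.mul_right, SemidirectProduct.inv_right, hnu1]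
  · rintro ⟨l, n⟩ ⟨l', n'⟩
    ext
    · show ΦL (mu (lam l)) (ΦL (nu n) l') * h (lam l) (ΦN (nu n) n')
        = ((⟨l, n⟩ : L ⋊[ΦL.comp nu] N) * ⟨l', n'⟩ * (⟨l, n⟩ : L ⋊[ΦL.comp nu] N)⁻¹).left
      simp only [SemidirectProduct.mul_left, SemidirectProduct.mul_right,
        SemidirectProduct.inv_left, SemidirectProduct.inv_right, MonoidHom.comp_apply,
        hk2, hnu2, hh3, map_mul, MulAut.mul_apply]
      group
    · show ΦN (nu n) n'
        = ((⟨l, n⟩ : L ⋊[ΦL.comp nu] N) * ⟨l', n'⟩ * (⟨l, n⟩ : L ⋊[ΦL.comp nu] N)⁻¹).right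
      simp only [SemidirectProduct.mul_right, SemidirectProduct.inv_right, hnu2]
end
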